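/- (Plant model conservation.) Let f be the output of TransformCtoT on a multilevel clustering with local buses over finite index sets I (plants) and J (requirements), whose root element set equals I, with domain mapping relation PR ⊆ I × J. Then every plant index i ∈ I occurs in the plant index set of the synthesis subproblem of at least one node of the output tree; in particular, i occurs in the subproblem assigned to the leaf whose element set is {i}. -/

import Mathlib

attribute [local instance] Classical.propDecidable

/-- A multilevel clustering with local buses: each node carries an element set `A`
(indices of plant components), a list `B` of bus children, a list `M` of non-bus
children, and a requirement index set `R`. -/
inductive MLC (I J : Type) : Type where
  | mk : Finset I → List (MLC I J) → List (MLC I J) → Finset J → MLC I J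

namespace MLC

variable {I J : Type}

/-- The element set `A(n)` of a node. -/
def elems : MLC I J → Finset I | mk A _ _ _ => A
/-- The bus children `B(n)` of a node. -/
def busCh : MLC I J → List (MLC I J) | mk _ B _ _ => B
/-- The non-bus children `M(n)` of a node. -/
def nonbusCh : MLC I J → List (MLC I J) | mk _ _ M _ => M
/-- The requirement index set `R(n)` of a node. -/
def reqs : MLC I J → Finset J | mk _ _ _ R => R
/-- All children `B(n) ∪ M(n)` of a node. -/
def children (t : MLC I J) : List (MLC I J) := t.busCh ++ t.nonbusCh
/-- Replace the requirement set carried by a node. -/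
def setReqs : MLC I J → Finset J → MLC I J | mk A B M _, R' => mk A B M R'

/-- Well-formedness of a multilevel clustering with local buses: a leaf has a
singleton element set and no children; an internal node has at least two children,
whose element sets are nonempty, pairwise disjoint and whose union is the node's
element set. -/
inductive WF : MLC I J → Prop where
  | leaf : ∀ (A : Finset I) (R : Finset J), A.card = 1 → WF (mk A [] [] R)
  | node : ∀ (A : Finset I) (B M : List (MLC I J)) (R : Finset J),
      2 ≤ (B ++ M).length →
      (∀ c ∈ B ++ M, (elems c).Nonempty) →
      (B ++ M).Pairwise (fun c d => Disjoint (elems c) (elems d)) →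
      ((B ++ M).map elems).foldr (· ∪ ·) ∅ = A →
      (∀ c ∈ B ++ M, WF c) →
      WF (mk A B M R)

end MLC

variable {I J : Type}

/-- Requirement `r` is related to cluster `c`: some plant index in the element set of
`c` is involved in `r` according to the domain mapping matrix `PR`. -/
def rel (PR : I → J → Prop) (r : J) (c : MLC I J) : Prop := ∃ p ∈ c.elems, PR p r

/-- The sublist of clusters of `cs` related to requirement `r`. -/
noncomputable def relF (PR : I → J → Prop) (r : J) (cs : List (MLC I J)) :
    List (MLC I J) :=
  cs.filter fun c => decide (rel PR r c)

/-- The requirements of `R` that stay at a node with bus children `B` and non-bus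
children `M`: those for which neither exactly one non-bus child is related, nor
(no non-bus child and exactly one bus child is related). -/
noncomputable def stayReqs (PR : I → J → Prop) (B M : List (MLC I J)) (R : Finset J) :
    Finset J :=
  R.filter fun r =>
    ¬ (relF PR r M).length = 1 ∧ ¬ ((relF PR r M) = [] ∧ (relF PR r B).length = 1)

/-- The requirements of `R` moved by PropReq into the non-bus child `c`:
`c` is the unique related non-bus cluster. -/
noncomputable def toNonbus (PR : I → J → Prop) (M : List (MLC I J)) (R : Finset J)
    (c : MLC I J) : Finset J :=
  R.filter fun r => relF PR r M = [c]

/-- The requirements of `R` moved by PropReq into the bus child `c`: no non-bus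
cluster is related and `c` is the unique related bus cluster. -/
noncomputable def toBus (PR : I → J → Prop) (B M : List (MLC I J)) (R : Finset J)
    (c : MLC I J) : Finset J :=
  R.filter fun r => relF PR r M = [] ∧ relF PR r B = [c]

/-- All plant indices involved in some requirement of `R`. -/
noncomputable def involved (PR : I → J → Prop) [Fintype I] (R : Finset J) : Finset I :=
  Finset.univ.filter fun i => ∃ r ∈ R, PR i r

/-- The subroutine PropReq: distributes the requirements of a node over the node
itself and its bus and non-bus children, and returns (as second component) the
accumulator set `P` of all plant indices involved in the requirements that remain. -/
noncomputable def propReq (PR : I → J → Prop) [Fintype I] :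
    MLC I J → MLC I J × Finset I
  | .mk A B M R =>
    (.mk A (B.map fun c => c.setReqs (c.reqs ∪ toBus PR B M R c))
           (M.map fun c => c.setReqs (c.reqs ∪ toNonbus PR M R c))
           (stayReqs PR B M R),
     involved PR (stayReqs PR B M R))

/-- The output tree of TransformCtoT: each node carries the element set of the
corresponding cluster together with its synthesis subproblem, i.e. a set of plant
indices and a set of requirement indices. -/
inductive SPTree (I J : Type) : Type where
  | mk : Finset I → Finset I → Finset J → List (SPTree I J) → SPTree I J

namespace SPTree

/-- Element set of the cluster corresponding to an output node. -/
def elemsS : SPTree I J → Finset I | mk A _ _ _ => A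
/-- Plant index set of the synthesis subproblem of an output node. -/
def plants : SPTree I J → Finset I | mk _ P _ _ => P
/-- Requirement index set of the synthesis subproblem of an output node. -/
def sreqs : SPTree I J → Finset J | mk _ _ R _ => R
/-- Children of an output node. -/
def chs : SPTree I J → List (SPTree I J) | mk _ _ _ cs => cs

end SPTree

/-- TransformCtoT (with the requirements pushed down by the parent passed as the
extra argument `Rin`): at a leaf it outputs the subproblem consisting of the leaf's
element together with all plants involved in its requirements; at an internal node
it performs PropReq, keeps the remaining requirements together with the plants they
involve, and recursively processes every bus child and every non-bus child with the
requirement sets moved into them. -/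
noncomputable def transform (PR : I → J → Prop) [Fintype I] :
    MLC I J → Finset J → SPTree I J
  | .mk A B M R, Rin =>
    if B ++ M = [] then
      SPTree.mk A (A ∪ involved PR (R ∪ Rin)) (R ∪ Rin) []
    else
      SPTree.mk A (involved PR (stayReqs PR B M (R ∪ Rin)))
        (stayReqs PR B M (R ∪ Rin))
        ((B.attach.map fun ⟨c, _hc⟩ => transform PR c (toBus PR B M (R ∪ Rin) c)) ++
         (M.attach.map fun ⟨c, _hc⟩ => transform PR c (toNonbus PR M (R ∪ Rin) c)))

mutual
/-- Number of occurrences of requirement index `j` among the requirement sets of the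
nodes of a multilevel clustering. -/
noncomputable def reqCountM (j : J) : MLC I J → ℕ
  | .mk _ B M R => (if j ∈ R then 1 else 0) + reqCountL j B + reqCountL j M
noncomputable def reqCountL (j : J) : List (MLC I J) → ℕ
  | [] => 0
  | c :: cs => reqCountM j c + reqCountL j cs
end

mutual
/-- Number of occurrences of requirement index `j` among the requirement sets of the
synthesis subproblems of the nodes of an output tree. -/
noncomputable def reqCountS (j : J) : SPTree I J → ℕ
  | .mk _ _ R cs => (if j ∈ R then 1 else 0) + reqCountSL j cs
noncomputable def reqCountSL (j : J) : List (SPTree I J) → ℕ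
  | [] => 0
  | c :: cs => reqCountS j c + reqCountSL j cs
end

mutual
/-- The list of all nodes of an output tree. -/
def allNodes : SPTree I J → List (SPTree I J)
  | .mk A P R cs => .mk A P R cs :: allNodesL cs
def allNodesL : List (SPTree I J) → List (SPTree I J)
  | [] => []
  | c :: cs => allNodes c ++ allNodesL cs
end

mutual
/-- All requirement sets in a multilevel clustering are empty. -/
def allReqsEmpty : MLC I J → Prop
  | .mk _ B M R => R = ∅ ∧ allReqsEmptyL B ∧ allReqsEmptyL M
def allReqsEmptyL : List (MLC I J) → Prop
  | [] => True
  | c :: cs => allReqsEmpty c ∧ allReqsEmptyL cs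
end

mutual
/-- The list of leaves of a multilevel clustering. -/
def leaves : MLC I J → List (MLC I J)
  | .mk A [] [] R => [.mk A [] [] R]
  | .mk _ B M _ => leavesL B ++ leavesL M
def leavesL : List (MLC I J) → List (MLC I J)
  | [] => []
  | c :: cs => leaves c ++ leavesL cs
end

/-- `callRel u v` holds iff, when TransformCtoT is run on the (well-formed) internal
node `v`, it performs a recursive call on `u`, i.e. `u` is one of the bus or non-bus
children of `v` with an updated requirement set. -/
def callRel (u v : MLC I J) : Prop :=
  MLC.WF v ∧ v.children ≠ [] ∧ ∃ c ∈ v.children, ∃ R' : Finset J, u = c.setReqs R'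

/-! The transformation never drops the element of a leaf: a leaf's subproblem contains its
own element whatever requirements are pushed into it, and every plant index descends along
the clustering to the leaf whose element set is that singleton. -/

theorem Finset.mem_foldr_union_iff {α : Type*} [DecidableEq α] {a : α} :
    ∀ {l : List (Finset α)}, a ∈ l.foldr (· ∪ ·) ∅ ↔ ∃ s ∈ l, a ∈ s
  | [] => by simp
  | s :: l => by simp [Finset.mem_foldr_union_iff]

namespace SPTree

theorem allNodes_subset_allNodesL {u : SPTree I J} :
    ∀ {l : List (SPTree I J)}, u ∈ l → allNodes u ⊆ allNodesL l
  | [], h => absurd h List.not_mem_nil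
  | c :: cs, h => by
    rcases List.mem_cons.mp h with rfl | h
    · exact List.subset_append_left _ _
    · exact List.Subset.trans (allNodes_subset_allNodesL h) (List.subset_append_right _ _)

theorem allNodes_subset_of_mem_chs {u : SPTree I J} :
    ∀ {n : SPTree I J}, u ∈ n.chs → allNodes u ⊆ allNodes n
  | mk _ _ _ _, h => List.Subset.trans (allNodes_subset_allNodesL h) (List.subset_cons_self _ _)

end SPTree

section Transform

variable [Fintype I] (PR : I → J → Prop)

theorem transform_leaf (A : Finset I) (R Rin : Finset J) :
    transform PR (.mk A [] [] R) Rin = .mk A (A ∪ involved PR (R ∪ Rin)) (R ∪ Rin) [] := by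
  simp [transform]

theorem exists_transform_mem_chs {A : Finset I} {B M : List (MLC I J)} {R : Finset J}
    (Rin : Finset J) (hBM : B ++ M ≠ []) {c : MLC I J} (hc : c ∈ B ++ M) :
    ∃ R', transform PR c R' ∈ (transform PR (.mk A B M R) Rin).chs := by
  rw [transform, if_neg hBM]
  rcases List.mem_append.mp hc with hcB | hcM
  · exact ⟨_, List.mem_append_left _ (List.mem_map.mpr ⟨⟨c, hcB⟩, List.mem_attach _ _, rfl⟩)⟩
  · exact ⟨_, List.mem_append_right _ (List.mem_map.mpr ⟨⟨c, hcM⟩, List.mem_attach _ _, rfl⟩)⟩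

theorem exists_leaf_mem_plants_transform {t : MLC I J} (ht : MLC.WF t) (Rin : Finset J)
    {i : I} (hi : i ∈ t.elems) :
    ∃ n ∈ allNodes (transform PR t Rin), n.chs = [] ∧ n.elemsS = {i} ∧ i ∈ n.plants := by
  induction ht generalizing Rin with
  | leaf A R hA =>
    obtain ⟨a, rfl⟩ := Finset.card_eq_one.mp hA
    obtain rfl : i = a := Finset.mem_singleton.mp hi
    rw [transform_leaf]
    exact ⟨_, List.mem_cons_self, rfl, rfl, Finset.mem_union_left _ (Finset.mem_singleton_self i)⟩
  | node A B M R hlen _ _ hunion _ ih =>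
    rw [MLC.elems, ← hunion, Finset.mem_foldr_union_iff] at hi
    obtain ⟨_, hmap, hic⟩ := hi
    obtain ⟨c, hc, rfl⟩ := List.mem_map.mp hmap
    have hBM : B ++ M ≠ [] := List.ne_nil_of_length_pos (by omega)
    obtain ⟨R', hR'⟩ := exists_transform_mem_chs PR Rin hBM (A := A) (R := R) hc
    obtain ⟨n, hn, hleaf⟩ := ih c hc R' hic
    exact ⟨n, SPTree.allNodes_subset_of_mem_chs hR' hn, hleaf⟩

end Transform

/-- Plant model conservation: Let `f` be the output of TransformCtoT on
a well-formed multilevel clustering with local buses whose root element set is all of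
`I`, invoked with the full requirement index set `J` at the root and empty
requirement sets at all other nodes. Then every plant index `i ∈ I` occurs in the
plant set of the synthesis subproblem of at least one node of the output tree; in
particular, `i` occurs in the subproblem assigned to the leaf whose element set is
`{i}`. -/
theorem plant_conservation {I J : Type} [Fintype I] [Fintype J] (PR : I → J → Prop)
    (t : MLC I J) (hwf : MLC.WF t)
    (helems : t.elems = (Finset.univ : Finset I))
    (hroot : t.reqs = (Finset.univ : Finset J))
    (hdesc : ∀ c ∈ t.children, allReqsEmpty c) :
    (∀ i : I, ∃ n ∈ allNodes (transform PR t ∅), i ∈ n.plants) ∧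
    (∀ i : I, ∃ n ∈ allNodes (transform PR t ∅),
      n.chs = [] ∧ n.elemsS = {i} ∧ i ∈ n.plants) := by
  have hleaf (i : I) := exists_leaf_mem_plants_transform PR hwf ∅ (helems ▸ Finset.mem_univ i)
  refine ⟨fun i => ?_, hleaf⟩
  obtain ⟨n, hn, -, -, hi⟩ := hleaf i
  exact ⟨n, hn, hi⟩
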